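/- Suppose d is long for k, L ≥ 1, and r_0, …, r_{L−1} are LE-conditions in Q_{d,s,k}, say r_l = (d,s,φ_l). Then there exists an LE-condition r* = (d,s,φ*) ∈ Q_{k+1} such that for every LE-condition r with r ≤ r*, there exists an LE-condition r′ with r′ ≤ r and |{l < L : r′ ≤ r_l}| ≥ (1 − 1/|d|)·L. (That is, Q_{d,s,k} is (1/|d|)-pseudo-fusion-linked, with the pseudo-fusion lying in Q_{k+1}.) -/

import Mathlib

/-!
Let `φ*(n)` be the set of values lying in more than an `L · 2^{-n/2^(k+1)}` share of the sets
`φ_l(n)`. Double counting against `|φ_l(n)| ≤ b(n) · 2^{-n/2^k}` gives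
`|φ*(n)| ≤ b(n) · 2^{-n/2^(k+1)}`, so `r* = (d, s, φ*)` lies in `Q_{k+1}`. Given `r ≤ r*`, pad its
first coordinate with zeros far enough out and enlarge its side conditions to `φ ∪ ⋃_l φ_l`; the
result `r'` extends `r`, and it extends `r_l` unless `r.s(n) ∈ φ_l(n)` at a position `n ≥ |d|`
where `r` has a new `1`. There `r.s(n) ∉ φ*(n)`, so each such `n` excludes at most
`L · 2^{-n/2^(k+1)} ≤ L / (n(n+1))` indices `l`, and these sum to at most `L / |d|`.
-/

open scoped Classical

/-- An LE-condition for the poset `LE_b`: a triple `(d, s, φ)` where `d` is a finite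
binary sequence, `s n < b n` for `n < |d|`, `φ n ⊆ {0,…,b n − 1}`, and for some `k`,
`|φ n| ≤ b n · 2^{−n/2^k}` for all `n ≥ |d|`. -/
structure LECond (b : ℕ → ℕ) where
  d : List Bool
  s : ℕ → ℕ
  φ : ℕ → Finset ℕ
  s_lt : ∀ n < d.length, s n < b n
  φ_sub : ∀ n, φ n ⊆ Finset.range (b n)
  bound : ∃ k : ℕ, ∀ n, d.length ≤ n →
    ((φ n).card : ℝ) ≤ (b n : ℝ) * (2 : ℝ) ^ (-(n : ℝ) / (2 : ℝ) ^ k)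

/-- Membership in `Q_k`: the witness `k` works. -/
def LECond.inQ {b : ℕ → ℕ} (p : LECond b) (k : ℕ) : Prop :=
  ∀ n, p.d.length ≤ n →
    ((p.φ n).card : ℝ) ≤ (b n : ℝ) * (2 : ℝ) ^ (-(n : ℝ) / (2 : ℝ) ^ k)

/-- Membership in `Q_{d,s,k}`: in `Q_k` with first two coordinates `d`, `s`. -/
def LECond.inQds {b : ℕ → ℕ} (p : LECond b) (d : List Bool) (s : ℕ → ℕ) (k : ℕ) : Prop :=
  p.d = d ∧ (∀ n < d.length, p.s n = s n) ∧ p.inQ k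

/-- The extension order on LE-conditions: `q ≤ p`. -/
def LECond.le {b : ℕ → ℕ} (q p : LECond b) : Prop :=
  p.d <+: q.d ∧ (∀ n < p.d.length, q.s n = p.s n) ∧ (∀ n, p.φ n ⊆ q.φ n) ∧
  ∀ n, q.d.getD n false = true → ¬ (p.d.getD n false = true) → q.s n ∉ p.φ n

/-- `d` is long for `k`: `|d| ≥ 2` and `2^{−n/2^k} ≤ 1/(n²(n+1)²)` for all `n ≥ |d|`. -/
def LongFor (k : ℕ) (d : List Bool) : Prop :=
  2 ≤ d.length ∧ ∀ n : ℕ, d.length ≤ n →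
    (2 : ℝ) ^ (-(n : ℝ) / (2 : ℝ) ^ k) ≤ 1 / ((n : ℝ) ^ 2 * ((n : ℝ) + 1) ^ 2)

open Finset

noncomputable def decay (k n : ℕ) : ℝ := 2 ^ (-(n : ℝ) / 2 ^ k)

lemma decay_pos (k n : ℕ) : 0 < decay k n := Real.rpow_pos_of_pos two_pos _

lemma decay_eq_sq_succ (k n : ℕ) : decay k n = decay (k + 1) n ^ 2 := by
  rw [decay, decay, ← Real.rpow_mul_natCast zero_le_two, pow_succ]
  congr 1
  field_simp
  norm_num

lemma decay_le_decay {k k' : ℕ} (h : k ≤ k') (n : ℕ) : decay k n ≤ decay k' n := by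
  refine Real.rpow_le_rpow_of_exponent_le one_le_two ?_
  rw [neg_div, neg_div, neg_le_neg_iff]
  exact div_le_div_of_nonneg_left (by positivity) (by positivity) (pow_right_mono₀ one_le_two h)

lemma mul_decay_le_one {c k n : ℕ} (h : 2 ^ k * c ≤ n) : c * decay k n ≤ 1 := by
  have hdecay : decay k n ≤ 2 ^ (-(c : ℝ)) := by
    refine Real.rpow_le_rpow_of_exponent_le one_le_two ?_
    rw [neg_div, neg_le_neg_iff, le_div_iff₀ (by positivity), mul_comm]
    exact_mod_cast h
  calc c * decay k n ≤ c * 2 ^ (-(c : ℝ)) := by gcongr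
    _ ≤ 1 := by
      rw [Real.rpow_neg zero_le_two, Real.rpow_natCast, ← div_eq_mul_inv,
        div_le_one (by positivity)]
      exact_mod_cast Nat.lt_two_pow_self.le

lemma sum_Ico_one_div_mul_succ {a M : ℕ} (ha : 0 < a) (h : a ≤ M) :
    ∑ n ∈ Ico a M, 1 / ((n : ℝ) * (n + 1)) = 1 / a - 1 / M := by
  induction M, h using Nat.le_induction with
  | base => simp
  | succ M hM ih =>
    have : (M : ℝ) ≠ 0 := by have := ha.trans_le hM; positivity
    rw [sum_Ico_succ_top hM, ih]
    push_cast
    field_simp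
    ring

lemma sum_one_div_mul_succ_le {a : ℕ} (ha : 0 < a) {P : Finset ℕ} (hP : ∀ n ∈ P, a ≤ n) :
    ∑ n ∈ P, 1 / ((n : ℝ) * (n + 1)) ≤ 1 / a := by
  have hsub : P ⊆ Ico a (P.sup id + 1) := fun n hn =>
    mem_Ico.2 ⟨hP n hn, Nat.lt_succ_of_le (le_sup (f := id) hn)⟩
  calc ∑ n ∈ P, 1 / ((n : ℝ) * (n + 1)) ≤ ∑ n ∈ Ico a (P.sup id + 1), 1 / ((n : ℝ) * (n + 1)) :=
        sum_le_sum_of_subset_of_nonneg hsub fun _ _ _ => by positivity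
    _ ≤ 1 / a := by
      rcases le_or_gt a (P.sup id + 1) with h | h
      · rw [sum_Ico_one_div_mul_succ ha h]
        linarith [show (0 : ℝ) ≤ 1 / ((P.sup id + 1 : ℕ) : ℝ) by positivity]
      · rw [Ico_eq_empty_of_le h.le, sum_empty]
        positivity

lemma List.IsPrefix.getD_eq {α : Type*} {l₁ l₂ : List α} (h : l₁ <+: l₂) {n : ℕ}
    (hn : n < l₁.length) (x : α) : l₂.getD n x = l₁.getD n x := by
  obtain ⟨t, rfl⟩ := h
  exact List.getD_append _ _ _ _ hn

lemma List.getD_append_replicate_of_length_le {α : Type*} (l : List α) (m : ℕ) {n : ℕ}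
    (hn : l.length ≤ n) (x : α) : (l ++ List.replicate m x).getD n x = x := by
  rw [List.getD_append_right _ _ _ _ hn]
  simp

lemma card_filter_lt_mul_le_sum_card {ι α : Type*} [DecidableEq α] (U : Finset α) (I : Finset ι)
    (A : ι → Finset α) (t : ℝ) :
    (#(U.filter fun j => t < #(I.filter fun i => j ∈ A i)) : ℝ) * t ≤ ∑ i ∈ I, (#(A i) : ℝ) := by
  set heavy := U.filter fun j => t < #(I.filter fun i => j ∈ A i)
  have hcount : ∑ j ∈ U, #(I.filter fun i => j ∈ A i) = ∑ i ∈ I, #(U.filter fun j => j ∈ A i) := by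
    simp only [card_filter]
    exact sum_comm
  calc (#heavy : ℝ) * t = ∑ _j ∈ heavy, t := by rw [sum_const, nsmul_eq_mul]
    _ ≤ ∑ j ∈ heavy, (#(I.filter fun i => j ∈ A i) : ℝ) :=
      sum_le_sum fun j hj => (mem_filter.1 hj).2.le
    _ ≤ ∑ j ∈ U, (#(I.filter fun i => j ∈ A i) : ℝ) :=
      sum_le_sum_of_subset_of_nonneg (filter_subset _ _) fun _ _ _ => Nat.cast_nonneg _
    _ = ∑ i ∈ I, (#(U.filter fun j => j ∈ A i) : ℝ) := by exact_mod_cast hcount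
    _ ≤ ∑ i ∈ I, (#(A i) : ℝ) :=
      sum_le_sum fun i _ => Nat.cast_le.2 (card_le_card fun _ hj => (mem_filter.1 hj).2)

lemma card_filter_exists_le_sum_card {α β : Type*} (s : Finset α) (t : Finset β)
    (R : α → β → Prop) [∀ a y, Decidable (R a y)] :
    #(s.filter fun a => ∃ y ∈ t, R a y) ≤ ∑ y ∈ t, #(s.filter fun a => R a y) := by
  refine (card_le_card ?_).trans card_biUnion_le
  intro a ha
  obtain ⟨has, y, hy, hR⟩ := mem_filter.1 ha
  exact mem_biUnion.2 ⟨y, hy, mem_filter.2 ⟨has, hR⟩⟩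

lemma one_sub_inv_mul_card_le_card_filter {α : Type*} [DecidableEq α] {U B : Finset α} {a : ℝ}
    (hB : (#B : ℝ) ≤ #U / a) (p : α → Prop) [DecidablePred p] (hp : ∀ x ∈ U, x ∉ B → p x) :
    (1 - 1 / a) * #U ≤ #(U.filter p) := by
  have hsdiff : U \ B ⊆ U.filter p := fun x hx =>
    mem_filter.2 ⟨(mem_sdiff.1 hx).1, hp x (mem_sdiff.1 hx).1 (mem_sdiff.1 hx).2⟩
  have hU : (#U : ℝ) ≤ #(U \ B) + #B := by exact_mod_cast card_le_card_sdiff_add_card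
  have hfilter : (#(U \ B) : ℝ) ≤ #(U.filter p) := by exact_mod_cast card_le_card hsdiff
  linarith [show (1 - 1 / a) * #U = #U - #U / a by ring]

lemma card_union_biUnion_le_decay_succ {ι : Type*} {A : Finset ℕ} {I : Finset ι}
    {F : ι → Finset ℕ} {β : ℝ} (hβ : 0 ≤ β) {m n : ℕ} (hA : (#A : ℝ) ≤ β * decay m n)
    (hF : ∀ i ∈ I, (#(F i) : ℝ) ≤ β * decay m n) (hn : 2 ^ (m + 1) * (#I + 1) ≤ n) :
    (#(A ∪ I.biUnion F) : ℝ) ≤ β * decay (m + 1) n := by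
  have hcard : #(A ∪ I.biUnion F) ≤ #A + ∑ i ∈ I, #(F i) :=
    (card_union_le _ _).trans (Nat.add_le_add_left card_biUnion_le _)
  have hsmall : ((#I + 1 : ℕ) : ℝ) * decay (m + 1) n ≤ 1 := mul_decay_le_one hn
  calc (#(A ∪ I.biUnion F) : ℝ) ≤ #A + ∑ i ∈ I, (#(F i) : ℝ) := by exact_mod_cast hcard
    _ ≤ β * decay m n + ∑ _i ∈ I, β * decay m n := add_le_add hA (sum_le_sum hF)
    _ = (((#I + 1 : ℕ) : ℝ) * decay (m + 1) n) * (β * decay (m + 1) n) := by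
      rw [sum_const, nsmul_eq_mul, decay_eq_sq_succ]
      push_cast
      ring
    _ ≤ β * decay (m + 1) n :=
      mul_le_of_le_one_left (mul_nonneg hβ (decay_pos _ _).le) hsmall

namespace LECond

variable {b : ℕ → ℕ}

lemma exists_le_forall_φ_subset (hb : ∀ n, 0 < b n) (p : LECond b) {ι : Type*} (I : Finset ι)
    (q : ι → LECond b) :
    ∃ p' : LECond b, p'.le p ∧ (∀ n, p.d.length ≤ n → p'.d.getD n false = false) ∧
      ∀ i ∈ I, ∀ n, (q i).φ n ⊆ p'.φ n := by
  choose K hK using fun i => (q i).bound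
  obtain ⟨k₀, hk₀⟩ := p.bound
  set m := max k₀ (I.sup K)
  -- padding `d` with zeros up to `N` makes room for the union of the `#I + 1` sets below
  set N := max (max p.d.length (I.sup fun i => (q i).d.length)) (2 ^ (m + 1) * (#I + 1))
  have hd_pad : ∀ n, p.d.length ≤ n →
      (p.d ++ List.replicate (N - p.d.length) false).getD n false = false :=
    fun n hn => List.getD_append_replicate_of_length_le _ _ hn _
  refine ⟨⟨p.d ++ List.replicate (N - p.d.length) false,
    fun n => if n < p.d.length then p.s n else 0,
    fun n => p.φ n ∪ I.biUnion fun i => (q i).φ n, ?_, ?_, m + 1, ?_⟩,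
    ⟨List.prefix_append _ _, fun n hn => if_pos hn, fun n => subset_union_left, ?_⟩, hd_pad,
    fun i hi n => subset_union_right.trans' (subset_biUnion_of_mem (fun i => (q i).φ n) hi)⟩
  · intro n _
    split_ifs with h
    · exact p.s_lt n h
    · exact hb n
  · exact fun n => union_subset (p.φ_sub n) (biUnion_subset.2 fun i _ => (q i).φ_sub n)
  · intro n hn
    have hpN : p.d.length ≤ N := (le_max_left _ _).trans (le_max_left _ _)
    have hN : N ≤ n := by
      rw [List.length_append, List.length_replicate] at hn
      omega
    have hpn : p.d.length ≤ n := hpN.trans hN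
    refine card_union_biUnion_le_decay_succ (Nat.cast_nonneg _)
      ((hk₀ n hpn).trans ?_) (fun i hi => ((hK i) n ?_).trans ?_) ((le_max_right _ _).trans hN)
    · gcongr
      exact decay_le_decay (le_max_left _ _) n
    · exact (le_sup (f := fun i => (q i).d.length) hi).trans
        ((le_max_right _ _).trans ((le_max_left _ _).trans hN))
    · gcongr
      exact decay_le_decay ((le_sup hi).trans (le_max_right _ _)) n
  · intro n h' h
    rcases lt_or_ge n p.d.length with hn | hn
    · exact absurd (((List.prefix_append _ _).getD_eq hn _).symm.trans h') h
    · exact absurd ((hd_pad n hn).symm.trans h') Bool.false_ne_true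

noncomputable def freshPositions (p : LECond b) (d : List Bool) : Finset ℕ :=
  (range p.d.length).filter fun n => p.d.getD n false = true ∧ ¬ d.getD n false = true

lemma mem_freshPositions {p : LECond b} {d : List Bool} {n : ℕ} :
    n ∈ p.freshPositions d ↔ p.d.getD n false = true ∧ ¬ d.getD n false = true := by
  refine ⟨fun h => (mem_filter.1 h).2, fun h => mem_filter.2 ⟨mem_range.2 ?_, h⟩⟩
  by_contra! hge
  exact absurd ((List.getD_eq_default _ _ hge).symm.trans h.1) Bool.false_ne_true

lemma length_le_of_mem_freshPositions {p : LECond b} {d : List Bool} (hd : d <+: p.d) {n : ℕ}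
    (hn : n ∈ p.freshPositions d) : d.length ≤ n := by
  obtain ⟨htrue, hfalse⟩ := mem_freshPositions.1 hn
  by_contra! hlt
  exact hfalse ((hd.getD_eq hlt false).symm.trans htrue)

lemma le_of_le_of_φ_subset {p' p o : LECond b} (hp' : p'.le p)
    (hnew : ∀ n, p.d.length ≤ n → p'.d.getD n false = false) (hd : o.d <+: p.d)
    (hs : ∀ n < o.d.length, p.s n = o.s n) (hφ : ∀ n, o.φ n ⊆ p'.φ n)
    (hfresh : ∀ n, p.d.getD n false = true → ¬ o.d.getD n false = true → p.s n ∉ o.φ n) :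
    p'.le o := by
  refine ⟨hd.trans hp'.1, fun n hn => (hp'.2.1 n (hn.trans_le hd.length_le)).trans (hs n hn),
    hφ, fun n h' ho => ?_⟩
  rcases lt_or_ge n p.d.length with hn | hn
  · rw [hp'.2.1 n hn]
    exact hfresh n ((hp'.1.getD_eq hn _).symm.trans h') ho
  · exact absurd ((hnew n hn).symm.trans h') Bool.false_ne_true

end LECond

lemma LongFor.decay_succ_le {k : ℕ} {d : List Bool} (hd : LongFor k d) {n : ℕ}
    (hn : d.length ≤ n) : decay (k + 1) n ≤ 1 / ((n : ℝ) * (n + 1)) := by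
  refine (pow_le_pow_iff_left₀ (decay_pos _ _).le (by positivity) two_ne_zero).1 ?_
  rw [← decay_eq_sq_succ, div_pow, one_pow, mul_pow]
  exact hd.2 n hn

section HeavySet

variable {b : ℕ → ℕ} (r : ℕ → LECond b) (L k : ℕ)

/-- The side conditions `φ*` of the pseudo-fusion. -/
noncomputable def heavySet (n : ℕ) : Finset ℕ :=
  (range (b n)).filter fun j => L * decay (k + 1) n < #((range L).filter fun l => j ∈ (r l).φ n)

variable {r L k}

lemma card_heavySet_le {d : List Bool} {s : ℕ → ℕ} (hr : ∀ l < L, (r l).inQds d s k) {n : ℕ}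
    (hn : d.length ≤ n) : (#(heavySet r L k n) : ℝ) ≤ b n * decay (k + 1) n := by
  rcases Nat.eq_zero_or_pos L with rfl | hL
  · simp [heavySet, decay_pos]
  have hsum : (#(heavySet r L k n) : ℝ) * (L * decay (k + 1) n) ≤ L * (b n * decay k n) :=
    calc (#(heavySet r L k n) : ℝ) * (L * decay (k + 1) n)
        ≤ ∑ l ∈ range L, (#((r l).φ n) : ℝ) :=
          card_filter_lt_mul_le_sum_card (range (b n)) (range L) (fun l => (r l).φ n) _
      _ ≤ ∑ _l ∈ range L, (b n : ℝ) * decay k n := sum_le_sum fun l hl => by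
          obtain ⟨hd, -, hQ⟩ := hr l (mem_range.1 hl)
          rw [← hd] at hn
          exact hQ n hn
      _ = L * (b n * decay k n) := by rw [sum_const, card_range, nsmul_eq_mul]
  rw [decay_eq_sq_succ k n] at hsum
  have hpos : 0 < (L : ℝ) * decay (k + 1) n := mul_pos (by exact_mod_cast hL) (decay_pos _ _)
  exact le_of_mul_le_mul_right (by linarith) hpos

lemma card_filter_mem_le_of_notMem_heavySet {n j : ℕ} (hj : j ∉ heavySet r L k n) :
    (#((range L).filter fun l => j ∈ (r l).φ n) : ℝ) ≤ L * decay (k + 1) n := by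
  by_cases hjb : j < b n
  · simpa [heavySet, hjb] using hj
  · rw [filter_false_of_mem fun l _ hl => hjb (mem_range.1 ((r l).φ_sub n hl))]
    simp [decay_pos]

/-- Long `d` makes the shares `2^{-n/2^(k+1)} ≤ 1/(n(n+1))` sum to at most `1/|d|`. -/
lemma card_filter_exists_mem_φ_le {d : List Bool} (hd : LongFor k d) {P : Finset ℕ}
    (hP : ∀ n ∈ P, d.length ≤ n) {x : ℕ → ℕ} (hx : ∀ n ∈ P, x n ∉ heavySet r L k n) :
    (#((range L).filter fun l => ∃ n ∈ P, x n ∈ (r l).φ n) : ℝ) ≤ L / d.length :=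
  calc (#((range L).filter fun l => ∃ n ∈ P, x n ∈ (r l).φ n) : ℝ)
      ≤ ∑ n ∈ P, (#((range L).filter fun l => x n ∈ (r l).φ n) : ℝ) := by
        exact_mod_cast card_filter_exists_le_sum_card _ _ _
    _ ≤ ∑ n ∈ P, L * (1 / ((n : ℝ) * (n + 1))) := sum_le_sum fun n hn =>
        (card_filter_mem_le_of_notMem_heavySet (hx n hn)).trans
          (mul_le_mul_of_nonneg_left (hd.decay_succ_le (hP n hn)) (Nat.cast_nonneg _))
    _ ≤ L * (1 / d.length) := by
        rw [← mul_sum]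
        exact mul_le_mul_of_nonneg_left
          (sum_one_div_mul_succ_le (by have := hd.1; omega) hP) (Nat.cast_nonneg _)
    _ = L / d.length := mul_one_div _ _

end HeavySet

/-- `Q_{d,s,k}` is `1/|d|`-pseudo-fusion-linked for long `d`, with pseudo-fusions in
`Q_{k+1}`: given `r 0, …, r (L−1) ∈ Q_{d,s,k}`, there is `r* = (d,s,φ*) ∈ Q_{k+1}` such
that densely below `r*`, conditions extend at least a `(1 − 1/|d|)` fraction of the
`r l`. -/
theorem stmt10 (b : ℕ → ℕ) (hb : ∀ n, 2 ^ n ≤ b n)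
    (d : List Bool) (s : ℕ → ℕ) (k : ℕ) (hd : LongFor k d)
    (L : ℕ) (hL : 1 ≤ L) (r : ℕ → LECond b) (hr : ∀ l < L, (r l).inQds d s k) :
    ∃ rstar : LECond b, rstar.d = d ∧ (∀ n < d.length, rstar.s n = s n) ∧
      rstar.inQ (k + 1) ∧
      ∀ r1 : LECond b, r1.le rstar →
        ∃ r2 : LECond b, r2.le r1 ∧
          (1 - 1 / (d.length : ℝ)) * (L : ℝ) ≤
            (((Finset.range L).filter fun l => r2.le (r l)).card : ℝ) := by
  obtain ⟨hd0, hs0, -⟩ := hr 0 hL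
  refine ⟨⟨d, s, heavySet r L k, fun n hn => hs0 n hn ▸ (r 0).s_lt n (hd0 ▸ hn),
    fun n => filter_subset _ _, k + 1, fun n hn => card_heavySet_le hr hn⟩,
    rfl, fun _ _ => rfl, fun n hn => card_heavySet_le hr hn, fun r1 hr1 => ?_⟩
  obtain ⟨r2, hr21, hnew, hφ⟩ :=
    r1.exists_le_forall_φ_subset (fun n => (Nat.two_pow_pos n).trans_le (hb n)) (range L) r
  refine ⟨r2, hr21, ?_⟩
  set B := (range L).filter fun l => ∃ n ∈ r1.freshPositions d, r1.s n ∈ (r l).φ n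
  have hB : (#B : ℝ) ≤ #(range L) / d.length := by
    rw [card_range]
    exact card_filter_exists_mem_φ_le hd (fun n => LECond.length_le_of_mem_freshPositions hr1.1)
      fun n hn => hr1.2.2.2 n (LECond.mem_freshPositions.1 hn).1 (LECond.mem_freshPositions.1 hn).2
  simpa using one_sub_inv_mul_card_le_card_filter hB _ fun l hlL hlB => by
    obtain ⟨hdl, hsl, -⟩ := hr l (mem_range.1 hlL)
    exact LECond.le_of_le_of_φ_subset hr21 hnew (hdl ▸ hr1.1)
      (fun n hn => (hr1.2.1 n (hdl ▸ hn)).trans (hsl n (hdl ▸ hn)).symm) (hφ l hlL)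
      fun n htrue hfalse hmem =>
        hlB (mem_filter.2 ⟨hlL, n, LECond.mem_freshPositions.2 ⟨htrue, hdl ▸ hfalse⟩, hmem⟩)
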